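/- arXiv:1809.01364 — 2 statements merged into one kernel-verified Lean document; each statement's English description precedes it below -/
import Mathlib

section
/- Knight's identity: for any real numbers u and v and any τ ∈ (0,1), ρ_τ(u − v) − ρ_τ(u) = v(1{u ≤ 0} − τ) + ∫₀^v (1{u ≤ t} − 1{u ≤ 0}) dt, where ρ_τ(x) = x(τ − 1{x < 0}). -/
open MeasureTheory intervalIntegral

/-! The check loss splits as `ρ_τ(x) = τ x + max (-x) 0`, and `t ↦ max (t - u) 0` is an
antiderivative of `t ↦ 1{u ≤ t}`, so both sides reduce to the same combination of
`τ v`, `max (v - u) 0` and `max (-u) 0`. -/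

lemma mul_sub_ite_lt_zero (τ x : ℝ) :
    x * (τ - (if x < 0 then (1:ℝ) else 0)) = τ * x + max (-x) 0 := by
  split_ifs with hx
  · rw [max_eq_left (by linarith)]; ring
  · rw [max_eq_right (by linarith)]; ring

lemma monotone_ite_le (u : ℝ) : Monotone fun t : ℝ => if u ≤ t then (1:ℝ) else 0 := by
  intro s t hst
  dsimp only
  split_ifs with hus hut
  · rfl
  · exact absurd (hus.trans hst) hut
  · norm_num
  · rfl

/-- One-sided derivatives avoid the kink at `t = u`, where there is no two-sided derivative. -/
lemma hasDerivWithinAt_max_sub_zero_Ioi (u t : ℝ) :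
    HasDerivWithinAt (fun s => max (s - u) 0) (if u ≤ t then 1 else 0) (Set.Ioi t) t := by
  split_ifs with hut
  · refine ((hasDerivAt_id t).sub_const u).hasDerivWithinAt.congr (fun s hs => ?_) ?_
    · exact max_eq_left (by simp only [Set.mem_Ioi] at hs; linarith)
    · exact max_eq_left (by linarith)
  · refine (hasDerivWithinAt_const t _ (0:ℝ)).congr_of_eventuallyEq ?_ (max_eq_right (by linarith))
    filter_upwards [nhdsWithin_le_nhds (Iio_mem_nhds (not_le.mp hut))] with s hs
    exact max_eq_right (by simp only [Set.mem_Iio] at hs; linarith)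

lemma integral_ite_le (u a b : ℝ) :
    ∫ t in a..b, (if u ≤ t then (1:ℝ) else 0) = max (b - u) 0 - max (a - u) 0 :=
  integral_eq_sub_of_hasDeriv_right (by fun_prop)
    (fun t _ => hasDerivWithinAt_max_sub_zero_Ioi u t) (monotone_ite_le u).intervalIntegrable

theorem knight_identity_general (τ u v : ℝ) :
    (u - v) * (τ - (if u - v < 0 then (1:ℝ) else 0)) - u * (τ - (if u < 0 then (1:ℝ) else 0))
      = v * ((if u ≤ 0 then (1:ℝ) else 0) - τ)
        + ∫ t in (0:ℝ)..v, ((if u ≤ t then (1:ℝ) else 0) - (if u ≤ 0 then (1:ℝ) else 0)) := by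
  rw [integral_sub (monotone_ite_le u).intervalIntegrable intervalIntegrable_const,
    intervalIntegral.integral_const, integral_ite_le, mul_sub_ite_lt_zero, mul_sub_ite_lt_zero,
    neg_sub, zero_sub, smul_eq_mul, sub_zero]
  ring

/-- Knight's identity for the quantile check loss
`ρ_τ(x) = x (τ - 1{x < 0})`. -/
theorem knight_identity (τ u v : ℝ) (hτ : τ ∈ Set.Ioo (0:ℝ) 1) :
    (u - v) * (τ - (if u - v < 0 then (1:ℝ) else 0)) - u * (τ - (if u < 0 then (1:ℝ) else 0))
      = v * ((if u ≤ 0 then (1:ℝ) else 0) - τ)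
        + ∫ t in (0:ℝ)..v, ((if u ≤ t then (1:ℝ) else 0) - (if u ≤ 0 then (1:ℝ) else 0)) :=
  knight_identity_general τ u v
end

section
/- Suppose Lₙ : ℝ^d → ℝ are convex functions and L(θ) = (1/2)θᵀSθ is a positive definite quadratic, such that Lₙ(θ) − Wₙᵀθ → L(θ) in probability pointwise for a tight sequence of random vectors Wₙ; then the convergence Lₙ(θ) − Wₙᵀθ → L(θ) holds uniformly over any compact subset of ℝ^d. (Deterministic version: if convex functions gₙ : ℝ^d → ℝ converge pointwise to a continuous function g, then the convergence is uniform on compact sets.) -/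
/-!
Pointwise convergence makes the family `gₙ` pointwise bounded. A convex function on a simplex is
bounded above by its values at the vertices, and convexity along the segment through the centre
turns an upper bound near a point into a lower bound, so the family is uniformly bounded near
every point. Convex functions bounded on a ball are Lipschitz on a smaller ball with a constant
depending only on the bound, hence the family is equicontinuous, and for an equicontinuous family
pointwise convergence is uniform on compact sets (Ascoli).
-/

open Metric Set Filter Topology

section Equicontinuous

variable {ι X α : Type*} [TopologicalSpace X] [UniformSpace α]

theorem EquicontinuousOn.tendstoUniformlyOn_of_tendsto {F : ι → X → α} {f : X → α}
    {p : Filter ι} {K : Set X} (hF : EquicontinuousOn F K) (hK : IsCompact K)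
    (h : ∀ x ∈ K, Tendsto (fun i => F i x) p (𝓝 (f x))) :
    TendstoUniformlyOn F f p K := by
  have hunif := (EquicontinuousOn.tendsto_uniformOnFun_iff_pi' (𝔖 := {K})
    (by simpa using hK) (by simpa using hF) p f).2
    (tendsto_pi_nhds.2 fun x => by simpa using h x (by simpa using x.2))
  exact UniformOnFun.tendsto_iff_tendstoUniformlyOn.1 hunif K rfl

end Equicontinuous

section Convex

variable {E ι : Type*} [NormedAddCommGroup E] [NormedSpace ℝ E]

lemma ConvexOn.two_mul_sub_le_of_forall_le {f : E → ℝ} {x₀ y : E} {r M : ℝ}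
    (hf : ConvexOn ℝ (ball x₀ r) f) (hM : ∀ z ∈ ball x₀ r, f z ≤ M) (hy : y ∈ ball x₀ r) :
    2 * f x₀ - M ≤ f y := by
  set z := x₀ + (x₀ - y)
  have hz : z ∈ ball x₀ r := by
    rw [mem_ball, dist_eq_norm, show z - x₀ = x₀ - y by simp [z], ← dist_eq_norm, dist_comm]
    exact hy
  have hmid : (2⁻¹ : ℝ) • y + (2⁻¹ : ℝ) • z = x₀ := by simp only [z]; module
  have h := hf.2 hy hz (inv_nonneg.2 zero_le_two) (inv_nonneg.2 zero_le_two) (by norm_num : (2⁻¹ : ℝ) + 2⁻¹ = 1)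
  rw [hmid, smul_eq_mul, smul_eq_mul] at h
  linarith [hM z hz]

variable [FiniteDimensional ℝ E] {f : ι → E → ℝ}

lemma exists_ball_forall_le_of_convexOn (hf : ∀ i, ConvexOn ℝ univ (f i))
    (hbdd : ∀ x, BddAbove (range fun i => f i x)) (x₀ : E) :
    ∃ r > 0, ∃ M, ∀ i, ∀ y ∈ ball x₀ r, f i y ≤ M := by
  obtain ⟨b, hx₀, -⟩ := exists_mem_interior_convexHull_affineBasis (x := x₀) univ_mem
  obtain ⟨r, hr, hball⟩ := Metric.mem_nhds_iff.1 (isOpen_interior.mem_nhds hx₀)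
  choose B hB using fun j => hbdd (b j)
  obtain ⟨M, hM⟩ := Finite.bddAbove_range B
  refine ⟨r, hr, M, fun i y hy => ?_⟩
  obtain ⟨_, ⟨j, rfl⟩, hle⟩ :=
    (hf i).exists_ge_of_mem_convexHull (subset_univ _) (interior_subset (hball hy))
  exact hle.trans ((hB j (mem_range_self i)).trans (hM (mem_range_self j)))

lemma exists_ball_forall_abs_le_of_convexOn (hf : ∀ i, ConvexOn ℝ univ (f i))
    (hbddAbove : ∀ x, BddAbove (range fun i => f i x)) {x₀ : E}
    (hbddBelow : BddBelow (range fun i => f i x₀)) :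
    ∃ r > 0, ∃ M, ∀ i, ∀ y, dist y x₀ < r → |f i y| ≤ M := by
  obtain ⟨r, hr, M, hM⟩ := exists_ball_forall_le_of_convexOn hf hbddAbove x₀
  obtain ⟨m, hm⟩ := hbddBelow
  refine ⟨r, hr, |M| + 2 * |m|, fun i y hy => abs_le.2 ⟨?_, ?_⟩⟩
  · have hlow := ((hf i).subset (subset_univ _) (convex_ball x₀ r)).two_mul_sub_le_of_forall_le
      (hM i) hy
    linarith [hm (mem_range_self i), le_abs_self M, neg_abs_le m]
  · linarith [hM i y hy, le_abs_self M, abs_nonneg m]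

theorem equicontinuous_of_convexOn (hf : ∀ i, ConvexOn ℝ univ (f i))
    (hbddAbove : ∀ x, BddAbove (range fun i => f i x))
    (hbddBelow : ∀ x, BddBelow (range fun i => f i x)) :
    Equicontinuous f := by
  intro x₀
  obtain ⟨r, hr, M, hM⟩ := exists_ball_forall_abs_le_of_convexOn hf hbddAbove (hbddBelow x₀)
  have hlip : ∀ i, LipschitzOnWith (2 * M / (r / 2)).toNNReal (f i) (ball x₀ (r - r / 2)) :=
    fun i => ((hf i).subset (subset_univ _) (convex_ball x₀ r)).lipschitzOnWith_of_abs_le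
      (by positivity) (hM i)
  have hnhds : ball x₀ (r - r / 2) ∈ 𝓝 x₀ := ball_mem_nhds x₀ (by linarith)
  have h := (LipschitzOnWith.uniformEquicontinuousOn f _ hlip).equicontinuousOn x₀
    (mem_of_mem_nhds hnhds)
  rwa [EquicontinuousWithinAt, nhdsWithin_eq_nhds.2 hnhds] at h

end Convex

theorem convexity_lemma_general (d : ℕ) (g : ℕ → (EuclideanSpace ℝ (Fin d)) → ℝ)
    (glim : EuclideanSpace ℝ (Fin d) → ℝ)
    (hconv : ∀ n, ConvexOn ℝ Set.univ (g n))
    (hpt : ∀ x, Filter.Tendsto (fun n => g n x) Filter.atTop (nhds (glim x))) :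
    ∀ K : Set (EuclideanSpace ℝ (Fin d)), IsCompact K →
      TendstoUniformlyOn g glim Filter.atTop K := by
  intro K hK
  have hequi : Equicontinuous g := equicontinuous_of_convexOn hconv
    (fun x => (hpt x).bddAbove_range) (fun x => (hpt x).bddBelow_range)
  exact (hequi.equicontinuousOn K).tendstoUniformlyOn_of_tendsto hK fun x _ => hpt x

/-- Pollard's convexity lemma (deterministic version): if convex functions
`gₙ : ℝ^d → ℝ` converge pointwise to a continuous function `g`, the
convergence is uniform on every compact set. -/
theorem convexity_lemma (d : ℕ) (g : ℕ → (EuclideanSpace ℝ (Fin d)) → ℝ)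
    (glim : EuclideanSpace ℝ (Fin d) → ℝ)
    (hconv : ∀ n, ConvexOn ℝ Set.univ (g n))
    (hcont : Continuous glim)
    (hpt : ∀ x, Filter.Tendsto (fun n => g n x) Filter.atTop (nhds (glim x))) :
    ∀ K : Set (EuclideanSpace ℝ (Fin d)), IsCompact K →
      TendstoUniformlyOn g glim Filter.atTop K :=
  convexity_lemma_general d g glim hconv hpt
end
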